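/- Let Φ be a basic read-once formula and σ an assignment. If there is no (ε,σ)-critical vertex, then σ is (2ε/3)-close to SAT(Φ). -/

import Mathlib

/-- Read-once formula trees over variable set `X`: leaves are variables (possibly
negated), internal nodes are `∧`/`∨` gates of unbounded arity or general Boolean
gates given by a function on the list of children values. -/
inductive Fla (X : Type) where
  | leaf : X → Fla X
  | neg : X → Fla X
  | and : List (Fla X) → Fla X
  | or : List (Fla X) → Fla X
  | gate : (List Bool → Bool) → List (Fla X) → Fla X

namespace Fla
variable {X : Type}

/-- Evaluation of a formula under an assignment. -/
def eval (σ : X → Bool) : Fla X → Bool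
  | leaf x => σ x
  | neg x => !σ x
  | and l => l.attach.all (fun ⟨φ, _⟩ => eval σ φ)
  | or l => l.attach.any (fun ⟨φ, _⟩ => eval σ φ)
  | gate f l => f (l.attach.map (fun ⟨φ, _⟩ => eval σ φ))

/-- The list of variables occurring in a formula (with multiplicity). -/
def vars : Fla X → List X
  | leaf x => [x]
  | neg x => [x]
  | and l => l.attach.flatMap (fun ⟨φ, _⟩ => vars φ)
  | or l => l.attach.flatMap (fun ⟨φ, _⟩ => vars φ)
  | gate _ l => l.attach.flatMap (fun ⟨φ, _⟩ => vars φ)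

/-- The size `|Φ|` of a formula: the number of (occurrences of) variables. -/
def size (φ : Fla X) : ℕ := (vars φ).length

/-- A formula is read-once when no variable occurs twice. -/
def ReadOnce (φ : Fla X) : Prop := (vars φ).Nodup

/-- Relative Hamming distance between two assignments, measured over the
variables of `φ`. -/
noncomputable def hamming (φ : Fla X) (σ σ' : X → Bool) : ℝ :=
  ((vars φ).countP (fun x => σ x != σ' x) : ℝ) / (size φ : ℝ)

/-- `σ` is `ε`-far from making `φ` evaluate to `b`. -/
def EpsFar (φ : Fla X) (b : Bool) (σ : X → Bool) (ε : ℝ) : Prop :=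
  ∀ σ', eval σ' φ = b → ε ≤ hamming φ σ σ'

/-- `σ` is `ε`-close to making `φ` evaluate to `b`. -/
def EpsClose (φ : Fla X) (b : Bool) (σ : X → Bool) (ε : ℝ) : Prop :=
  ∃ σ', eval σ' φ = b ∧ hamming φ σ σ' ≤ ε

/-- The children of the root. -/
def children : Fla X → List (Fla X)
  | and l => l
  | or l => l
  | gate _ l => l
  | _ => []

def isAnd : Fla X → Prop
  | and _ => True
  | _ => False

def isOr : Fla X → Prop
  | or _ => True
  | _ => False

/-- The `i`-th input of the `n`-ary gate `f` is `(a,b)`-forceful. -/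
def Forceful (f : List Bool → Bool) (n i : ℕ) : Prop :=
  ∃ a b : Bool, ∀ l : List Bool, l.length = n → l[i]? = some a → f l = b

/-- An `n`-ary gate is unforceable if no input is forceful. -/
def Unforceable (f : List Bool → Bool) (n : ℕ) : Prop :=
  ∀ i < n, ¬ Forceful f n i

/-- `k`-`x`-basic formulas. -/
inductive KxBasic (k : ℕ) : Fla X → Prop where
  | leaf (x : X) : KxBasic k (.leaf x)
  | neg (x : X) : KxBasic k (.neg x)
  | and (l : List (Fla X)) : 2 ≤ l.length → (∀ φ ∈ l, KxBasic k φ) →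
      (∀ φ ∈ l, ¬ isAnd φ) → KxBasic k (.and l)
  | or (l : List (Fla X)) : 2 ≤ l.length → (∀ φ ∈ l, KxBasic k φ) →
      (∀ φ ∈ l, ¬ isOr φ) → KxBasic k (.or l)
  | gate (f : List Bool → Bool) (l : List (Fla X)) : 2 ≤ l.length → l.length ≤ k →
      Unforceable f l.length → (∀ φ ∈ l, KxBasic k φ) → KxBasic k (.gate f l)

/-- Basic formulas: only `∧`/`∨` gates, alternating, negations at leaves. -/
inductive BasicF : Fla X → Prop where
  | leaf (x : X) : BasicF (.leaf x)
  | neg (x : X) : BasicF (.neg x)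
  | and (l : List (Fla X)) : 2 ≤ l.length → (∀ φ ∈ l, BasicF φ) →
      (∀ φ ∈ l, ¬ isAnd φ) → BasicF (.and l)
  | or (l : List (Fla X)) : 2 ≤ l.length → (∀ φ ∈ l, BasicF φ) →
      (∀ φ ∈ l, ¬ isOr φ) → BasicF (.or l)

end Fla

namespace Fla
variable {X : Type}

/-- The vertex of the formula tree reached by following the path `p` of child
indices from the root, if it exists, given as the subformula rooted there. -/
def subAt : Fla X → List ℕ → Option (Fla X)
  | φ, [] => some φ
  | φ, i :: p =>
    match (children φ)[i]? with
    | some c => subAt c p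
    | none => none

end Fla

namespace Fla
variable {X : Type}

/-- A vertex (given by the path `p` from the root) is `(ε,σ)`-important:
`σ` does not satisfy `Φ`, and for every vertex `u` on the root-to-`v` path,
`σ` is `(2ε/3)(1+2ε/3)^{⌊depth(u)/3⌋}`-far from satisfying `Φ_u`, and if `u` is
an `∨`-vertex other than `v` itself then the path continues from `u` through a
heaviest child of `u`. -/
def Important (Φ : Fla X) (σ : X → Bool) (ε : ℝ) (p : List ℕ) : Prop :=
  (∃ ψ, subAt Φ p = some ψ) ∧
  eval σ Φ = false ∧
  ∀ q : List ℕ, q <+: p →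
    (∀ ψ, subAt Φ q = some ψ →
      EpsFar ψ true σ ((2 * ε / 3) * (1 + 2 * ε / 3) ^ (q.length / 3))) ∧
    (q ≠ p → ∀ l, subAt Φ q = some (Fla.or l) →
      ∃ i rest c, p = q ++ i :: rest ∧ l[i]? = some c ∧ ∀ w ∈ l, size w ≤ size c)

/-- A vertex is `(ε,σ)`-critical if it is `(ε,σ)`-important and is a leaf
labelled by a variable. -/
def Critical (Φ : Fla X) (σ : X → Bool) (ε : ℝ) (p : List ℕ) : Prop :=
  Important Φ σ ε p ∧
  ∃ x : X, subAt Φ p = some (Fla.leaf x) ∨ subAt Φ p = some (Fla.neg x)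

end Fla

/-!
If `σ` is `2ε/3`-far from `SAT(Φ)`, walk down from the root keeping the current vertex far from
satisfiable. At an `∧`-vertex some child is as far as the vertex itself, because on a read-once
formula satisfying assignments of the children glue together. At an `∨`-vertex `u` whose
formula is `δ`-far, satisfying one child `w` alone costs at most `|Φ_w|` changes, so every child
has size at least `δ|Φ_u|`; as `u` has a second child, satisfying a child `c` costs at least
`δ|Φ_u| ≥ δ(|Φ_c| + δ|Φ_u|) ≥ δ(1+δ)|Φ_c|`. Since the gates alternate, the farness gains a factor `1 + 2ε/3` at
least every two levels, faster than the threshold `(2ε/3)(1+2ε/3)^⌊depth/3⌋`, so the walk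
(through a heaviest child at each `∨`) ends at a critical leaf.
-/

lemma List.exists_mem_add_le_sum_map {α : Type*} (f : α → ℕ) {l : List α} {a : α} (ha : a ∈ l)
    (hlen : 2 ≤ l.length) : ∃ b ∈ l, f a + f b ≤ (l.map f).sum := by
  classical
  obtain ⟨b, hb⟩ := List.exists_mem_of_length_pos
    (by rw [List.length_erase_of_mem ha]; omega : 0 < (l.erase a).length)
  refine ⟨b, List.mem_of_mem_erase hb, ?_⟩
  rw [← List.sum_map_erase f ha]
  exact Nat.add_le_add_left (List.le_sum_of_mem (List.mem_map_of_mem hb)) _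

namespace Fla

variable {X : Type}

@[simp] lemma vars_and (l : List (Fla X)) : vars (.and l) = l.flatMap vars := by
  simp [vars, List.flatMap]

@[simp] lemma vars_or (l : List (Fla X)) : vars (.or l) = l.flatMap vars := by
  simp [vars, List.flatMap]

@[simp] lemma vars_gate (f : List Bool → Bool) (l : List (Fla X)) :
    vars (.gate f l) = l.flatMap vars := by
  simp [vars, List.flatMap]

@[simp] lemma eval_and (σ : X → Bool) (l : List (Fla X)) :
    eval σ (.and l) = l.all (eval σ) := by
  simp [eval]

@[simp] lemma eval_or (σ : X → Bool) (l : List (Fla X)) :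
    eval σ (.or l) = l.any (eval σ) := by
  simp [eval]

lemma vars_subset_of_mem_children {φ c : Fla X} (hc : c ∈ children φ) : vars c ⊆ vars φ := by
  cases φ <;> simp only [children, List.not_mem_nil] at hc <;>
    exact fun x hx => by simpa using ⟨_, hc, hx⟩

theorem eval_congr {σ τ : X → Bool} : ∀ φ : Fla X, (∀ x ∈ vars φ, σ x = τ x) →
    eval σ φ = eval τ φ
  | leaf x, h => by simpa [eval] using h x (by simp [vars])
  | neg x, h => by simp [eval, h x (by simp [vars])]
  | and l, h => by
    simp only [eval]
    congr 1; funext ⟨c, hc⟩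
    exact eval_congr c fun x hx => h x (vars_subset_of_mem_children hc hx)
  | or l, h => by
    simp only [eval]
    congr 1; funext ⟨c, hc⟩
    exact eval_congr c fun x hx => h x (vars_subset_of_mem_children hc hx)
  | gate f l, h => by
    simp only [eval]
    congr 1; refine List.map_congr_left fun ⟨c, hc⟩ _ => ?_
    exact eval_congr c fun x hx => h x (vars_subset_of_mem_children hc hx)

lemma size_and (l : List (Fla X)) : size (.and l) = (l.map size).sum := by
  simp [size, List.length_flatMap]; rfl

lemma size_or (l : List (Fla X)) : size (.or l) = (l.map size).sum := by
  simp [size, List.length_flatMap]; rfl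

lemma BasicF.size_pos {φ : Fla X} (hb : BasicF φ) : 0 < size φ := by
  induction hb with
  | leaf x | neg x => simp [size, vars]
  | and l hlen _ _ ih | or l hlen _ _ ih =>
    obtain ⟨c, hc⟩ := List.exists_mem_of_length_pos (by omega : 0 < l.length)
    simp only [size_and, size_or]
    exact (ih c hc).trans_le (List.le_sum_of_mem (List.mem_map_of_mem hc))

def diffCount (φ : Fla X) (σ τ : X → Bool) : ℕ := (vars φ).countP fun x => σ x != τ x

lemma diffCount_and (l : List (Fla X)) (σ τ : X → Bool) :
    diffCount (.and l) σ τ = (l.map fun c => diffCount c σ τ).sum := by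
  simp [diffCount, List.countP_flatMap]; rfl

lemma diffCount_le_size (φ : Fla X) (σ τ : X → Bool) : diffCount φ σ τ ≤ size φ :=
  List.countP_le_length

lemma diffCount_congr {φ : Fla X} {σ τ τ' : X → Bool} (h : ∀ x ∈ vars φ, τ x = τ' x) :
    diffCount φ σ τ = diffCount φ σ τ' :=
  List.countP_congr fun x hx => by rw [h x hx]

lemma diffCount_le_diffCount_of_eqOn_compl {φ ψ : Fla X} {σ τ : X → Bool} (hnd : (vars φ).Nodup)
    (h : ∀ x ∉ vars ψ, τ x = σ x) : diffCount φ σ τ ≤ diffCount ψ σ τ := by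
  simp only [diffCount, List.countP_eq_length_filter]
  refine ((hnd.filter _).subperm fun x hx => ?_).length_le
  rw [List.mem_filter] at hx ⊢
  refine ⟨?_, hx.2⟩
  by_contra hψ
  simp [h x hψ] at hx

lemma epsFar_iff {φ : Fla X} (hs : 0 < size φ) {b : Bool} {σ : X → Bool} {δ : ℝ} :
    EpsFar φ b σ δ ↔ ∀ τ, eval τ φ = b → δ * size φ ≤ diffCount φ σ τ := by
  simp only [EpsFar, hamming, le_div_iff₀ (Nat.cast_pos.2 hs : (0 : ℝ) < size φ)]; rfl

lemma EpsFar.mono {φ : Fla X} {b : Bool} {σ : X → Bool} {δ δ' : ℝ} (hf : EpsFar φ b σ δ)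
    (h : δ' ≤ δ) : EpsFar φ b σ δ' :=
  fun τ hτ => h.trans (hf τ hτ)

lemma ReadOnce.of_mem_children {φ c : Fla X} (hro : ReadOnce φ) (hc : c ∈ children φ) :
    ReadOnce c := by
  cases φ <;> simp only [children, List.not_mem_nil] at hc <;>
    simp only [ReadOnce, vars_and, vars_or, vars_gate, List.nodup_flatMap] at hro <;>
    exact hro.1 c hc

lemma subAt_cons {φ c : Fla X} {i : ℕ} (h : (children φ)[i]? = some c) (p : List ℕ) :
    subAt φ (i :: p) = subAt c p := by
  simp [subAt, h]

lemma eq_of_mem_vars_of_nodup {l : List (Fla X)} (hnd : (l.flatMap vars).Nodup)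
    {c c' : Fla X} (hc : c ∈ l) (hc' : c' ∈ l) {x : X} (hx : x ∈ vars c) (hx' : x ∈ vars c') :
    c = c' := by
  have : Std.Symm (Function.onFun List.Disjoint (vars (X := X))) := ⟨fun _ _ h => h.symm⟩
  by_contra hne
  exact (List.nodup_flatMap.1 hnd).2.forall hc hc' hne hx hx'

lemma exists_glue {l : List (Fla X)} (hnd : (l.flatMap vars).Nodup) (g : Fla X → X → Bool) :
    ∃ τ : X → Bool, ∀ c ∈ l, ∀ x ∈ vars c, τ x = g c x := by
  classical
  refine ⟨fun x => if h : ∃ c ∈ l, x ∈ vars c then g h.choose x else false, fun c hc x hx => ?_⟩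
  have h : ∃ c ∈ l, x ∈ vars c := ⟨c, hc, hx⟩
  dsimp only
  rw [dif_pos h, eq_of_mem_vars_of_nodup hnd h.choose_spec.1 hc h.choose_spec.2 hx]

lemma BasicF.exists_eval_eq_true {φ : Fla X} (hb : BasicF φ) (hro : ReadOnce φ) :
    ∃ τ, eval τ φ = true := by
  induction hb with
  | leaf x => exact ⟨fun _ => true, by simp [eval]⟩
  | neg x => exact ⟨fun _ => false, by simp [eval]⟩
  | and l _ _ _ ih =>
    choose! g hg using fun c hc => ih c hc (hro.of_mem_children hc)
    obtain ⟨τ, hτ⟩ := exists_glue (by rwa [ReadOnce, vars_and] at hro) g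
    refine ⟨τ, ?_⟩
    simp only [eval_and, List.all_eq_true]
    exact fun c hc => (eval_congr c (hτ c hc)).trans (hg c hc)
  | or l hlen _ _ ih =>
    obtain ⟨c, hc⟩ := List.exists_mem_of_length_pos (by omega : 0 < l.length)
    obtain ⟨τ, hτ⟩ := ih c hc (hro.of_mem_children hc)
    exact ⟨τ, by simpa only [eval_or, List.any_eq_true] using ⟨c, hc, hτ⟩⟩

theorem EpsFar.exists_of_and {l : List (Fla X)} (hb : BasicF (.and l)) (hro : ReadOnce (.and l))
    {σ : X → Bool} {δ : ℝ} (hfar : EpsFar (.and l) true σ δ) : ∃ c ∈ l, EpsFar c true σ δ := by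
  cases hb with | and _ hlen hbs _ =>
  rw [ReadOnce, vars_and] at hro
  by_contra! hclose
  have hsmall : ∀ c ∈ l, ∃ τ, eval τ c = true ∧ (diffCount c σ τ : ℝ) < δ * size c := by
    intro c hc
    simpa [epsFar_iff (hbs c hc).size_pos] using hclose c hc
  choose! g hg using hsmall
  obtain ⟨τ, hτ⟩ := exists_glue hro g
  have hsat : eval τ (.and l) = true := by
    simp only [eval_and, List.all_eq_true]
    exact fun c hc => (eval_congr c (hτ c hc)).trans (hg c hc).1
  have hdiff : (diffCount (.and l) σ τ : ℝ) < δ * size (.and l) := by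
    rw [diffCount_and, size_and, Nat.cast_list_sum, Nat.cast_list_sum, List.map_map, List.map_map,
      ← List.sum_map_mul_left]
    obtain ⟨c, hc⟩ := List.exists_mem_of_length_pos (by omega : 0 < l.length)
    refine List.sum_lt_sum _ _ (fun c hc => ?_) ⟨c, hc, ?_⟩ <;>
      simp only [Function.comp_apply, diffCount_congr (hτ c hc)]
    exacts [(hg c hc).2.le, (hg c hc).2]
  exact hdiff.not_ge ((epsFar_iff (BasicF.and l hlen hbs ‹_›).size_pos).1 hfar τ hsat)

theorem EpsFar.of_or {l : List (Fla X)} (hb : BasicF (.or l)) (hro : ReadOnce (.or l))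
    {c : Fla X} (hc : c ∈ l) {σ : X → Bool} {δ : ℝ} (hδ : 0 ≤ δ)
    (hfar : EpsFar (.or l) true σ δ) : EpsFar c true σ (δ * (1 + δ)) := by
  classical
  rw [epsFar_iff hb.size_pos] at hfar
  cases hb with | or _ hlen hbs _ =>
  have hchild : ∀ w ∈ l, ∀ ρ, eval ρ w = true → δ * size (.or l) ≤ diffCount w σ ρ := by
    intro w hw ρ hρ
    let τ x := if x ∈ vars w then ρ x else σ x
    have hτ : ∀ x ∈ vars w, τ x = ρ x := fun x hx => if_pos hx
    have hsat : eval τ (.or l) = true := by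
      simp only [eval_or, List.any_eq_true]
      exact ⟨w, hw, (eval_congr w hτ).trans hρ⟩
    calc δ * size (.or l) ≤ diffCount (.or l) σ τ := hfar τ hsat
      _ ≤ diffCount w σ τ := mod_cast diffCount_le_diffCount_of_eqOn_compl hro fun x hx => if_neg hx
      _ = diffCount w σ ρ := by rw [diffCount_congr hτ]
  obtain ⟨c', hc', hsize⟩ := List.exists_mem_add_le_sum_map size hc hlen
  rw [← size_or] at hsize
  obtain ⟨ρ', hρ'⟩ := (hbs c' hc').exists_eval_eq_true (hro.of_mem_children hc')
  have hsib : δ * size (.or l) ≤ size c' :=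
    (hchild c' hc' ρ' hρ').trans (mod_cast diffCount_le_size c' σ ρ')
  have hsize' : (size c : ℝ) + size c' ≤ size (.or l) := mod_cast hsize
  rw [epsFar_iff (hbs c hc).size_pos]
  intro ρ hρ
  calc δ * (1 + δ) * size c = δ * (size c + δ * size c) := by ring
    _ ≤ δ * (size c + size c') := by
      gcongr
      exact (mul_le_mul_of_nonneg_left (by linarith [(size c').cast_nonneg (α := ℝ)]) hδ).trans hsib
    _ ≤ δ * size (.or l) := by gcongr
    _ ≤ diffCount c σ ρ := hchild c hc ρ hρ

noncomputable def threshold (ε : ℝ) (d : ℕ) : ℝ := 2 * ε / 3 * (1 + 2 * ε / 3) ^ (d / 3)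

lemma threshold_mono {ε : ℝ} (hε : 0 ≤ ε) : Monotone (threshold ε) := fun d d' h => by
  unfold threshold
  gcongr
  linarith

lemma two_mul_div_three_le_threshold {ε : ℝ} (hε : 0 ≤ ε) (d : ℕ) : 2 * ε / 3 ≤ threshold ε d :=
  le_mul_of_one_le_right (by positivity) (one_le_pow₀ (by linarith))

lemma threshold_add_two_le {ε : ℝ} (hε : 0 ≤ ε) (d : ℕ) :
    threshold ε (d + 2) ≤ threshold ε d * (1 + threshold ε d) :=
  calc threshold ε (d + 2) ≤ threshold ε (d + 3) := threshold_mono hε (by omega)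
    _ = threshold ε d * (1 + 2 * ε / 3) := by
      simp only [threshold, Nat.add_div_right d three_pos, pow_succ, mul_assoc]
    _ ≤ threshold ε d * (1 + threshold ε d) := by
      have := two_mul_div_three_le_threshold hε d
      gcongr
      linarith

/-- The conditions of `Important` along the path `p` in `φ`, for `φ` placed at depth `d` of the
ambient formula. -/
def ImportantPath (φ : Fla X) (σ : X → Bool) (ε : ℝ) (d : ℕ) (p : List ℕ) : Prop :=
  ∀ q : List ℕ, q <+: p →
    (∀ ψ, subAt φ q = some ψ → EpsFar ψ true σ (threshold ε (d + q.length))) ∧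
    (q ≠ p → ∀ l, subAt φ q = some (Fla.or l) →
      ∃ i rest c, p = q ++ i :: rest ∧ l[i]? = some c ∧ ∀ w ∈ l, size w ≤ size c)

lemma ImportantPath.nil {φ : Fla X} {σ : X → Bool} {ε : ℝ} {d : ℕ}
    (hfar : EpsFar φ true σ (threshold ε d)) : ImportantPath φ σ ε d [] := by
  intro q hq
  obtain rfl := List.prefix_nil.1 hq
  exact ⟨fun ψ hψ => by cases hψ; exact hfar, fun h => absurd rfl h⟩

lemma ImportantPath.cons {φ c : Fla X} {σ : X → Bool} {ε : ℝ} {d i : ℕ} {p : List ℕ}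
    (hc : (children φ)[i]? = some c) (hfar : EpsFar φ true σ (threshold ε d))
    (hheavy : ∀ l, φ = .or l → ∀ w ∈ l, size w ≤ size c)
    (hp : ImportantPath c σ ε (d + 1) p) : ImportantPath φ σ ε d (i :: p) := by
  rintro (_ | ⟨j, q⟩) hq
  · refine ⟨fun ψ hψ => by cases hψ; exact hfar, fun _ l hl => ?_⟩
    obtain rfl : φ = .or l := Option.some.inj hl
    exact ⟨i, p, c, rfl, hc, hheavy l rfl⟩
  · obtain ⟨rfl, hq'⟩ := List.cons_prefix_cons.1 hq
    obtain ⟨hfar', hheavy'⟩ := hp q hq'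
    rw [subAt_cons hc]
    refine ⟨fun ψ hψ => ?_, fun hne l hl => ?_⟩
    · simpa only [List.length_cons, add_assoc, add_comm 1] using hfar' ψ hψ
    · obtain ⟨k, rest, c', rfl, h⟩ := hheavy' (fun h => hne (h ▸ rfl)) l hl
      exact ⟨k, rest, c', rfl, h⟩

/-- `hfarAnd` is needed because an `∧`-vertex passes its farness unchanged to a child one level
deeper. -/
theorem BasicF.exists_importantPath {ε : ℝ} (hε : 0 ≤ ε) {σ : X → Bool} {φ : Fla X}
    (hb : BasicF φ) (hro : ReadOnce φ) {d : ℕ} (hfar : EpsFar φ true σ (threshold ε d))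
    (hfarAnd : isAnd φ → EpsFar φ true σ (threshold ε (d + 1))) :
    ∃ p, (∃ x, subAt φ p = some (.leaf x) ∨ subAt φ p = some (.neg x)) ∧
      ImportantPath φ σ ε d p := by
  induction hb generalizing d with
  | leaf x => exact ⟨[], ⟨x, .inl rfl⟩, .nil hfar⟩
  | neg x => exact ⟨[], ⟨x, .inr rfl⟩, .nil hfar⟩
  | and l hlen hbs hna ih =>
    obtain ⟨c, hc, hcfar⟩ := (hfarAnd trivial).exists_of_and (.and l hlen hbs hna) hro
    obtain ⟨i, hi⟩ := List.mem_iff_getElem?.1 hc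
    obtain ⟨p, hleaf, hp⟩ :=
      ih c hc (hro.of_mem_children hc) hcfar fun h => absurd h (hna c hc)
    exact ⟨i :: p, by rwa [subAt_cons hi], .cons hi hfar (fun _ h => by cases h) hp⟩
  | or l hlen hbs hno ih =>
    obtain ⟨c, hc, hheavy⟩ := Set.exists_max_image {c | c ∈ l} size l.finite_toSet
      (List.exists_mem_of_length_pos (by omega))
    obtain ⟨i, hi⟩ := List.mem_iff_getElem?.1 hc
    have hcfar := hfar.of_or (.or l hlen hbs hno) hro hc (by
      linarith [two_mul_div_three_le_threshold hε d])
    have hgrow := threshold_add_two_le hε d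
    obtain ⟨p, hleaf, hp⟩ := ih c hc (hro.of_mem_children hc)
      (hcfar.mono ((threshold_mono hε (by omega)).trans hgrow)) fun _ => hcfar.mono hgrow
    exact ⟨i :: p, by rwa [subAt_cons hi], .cons hi hfar (fun _ h => by cases h; exact hheavy) hp⟩

end Fla

open Fla in
/-- if a basic read-once formula has no `(ε,σ)`-critical
vertex, then `σ` is `(2ε/3)`-close to satisfying it. -/
theorem no_critical_implies_close {X : Type} (Φ : Fla X) (hb : BasicF Φ)
    (hro : Φ.ReadOnce) (σ : X → Bool) (ε : ℝ) (hε : 0 < ε)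
    (hnone : ∀ p : List ℕ, ¬ Critical Φ σ ε p) :
    EpsClose Φ true σ (2 * ε / 3) := by
  by_contra hclose
  have hfar : EpsFar Φ true σ (threshold ε 0) := by
    simp only [threshold, Nat.zero_div, pow_zero, mul_one]
    intro τ hτ
    by_contra! h
    exact hclose ⟨τ, hτ, h.le⟩
  have heval : eval σ Φ = false := by
    by_contra h
    exact hclose ⟨σ, by simpa using h, by simp [hamming]; positivity⟩
  obtain ⟨p, hleaf, hpath⟩ := hb.exists_importantPath hε.le hro hfar fun _ => hfar
  refine hnone p ⟨⟨?_, heval, by simpa [ImportantPath, threshold] using hpath⟩, hleaf⟩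
  obtain ⟨x, hx | hx⟩ := hleaf <;> exact ⟨_, hx⟩
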